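/- Let w, a, b be unit vectors in ℝⁿ with ⟨a, w⟩ > 1/√2, ⟨b, w⟩ ≥ 0, and suppose a, b, w lie in a common 2-dimensional subspace with ⟨a, b⟩ < 0. Then ⟨a, b⟩ ≥ −1/√2, and consequently ‖a − b‖ ≤ 3·min(‖a − b‖, ‖a + b‖). -/
import Mathlib

open scoped RealInnerProductSpace

set_option maxHeartbeats 1000000 in
/-- For unit vectors `w, a, b` lying in a common 2-dimensional subspace of `ℝⁿ`
with `⟨a,w⟩ > 1/√2`, `⟨b,w⟩ ≥ 0` and `⟨a,b⟩ < 0`, one has `⟨a,b⟩ ≥ −1/√2`, and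
consequently `‖a − b‖ ≤ 3 min(‖a − b‖, ‖a + b‖)`. -/
theorem inner_lower_bound_two_dim {n : ℕ} (w a b : EuclideanSpace ℝ (Fin n))
    (hw : ‖w‖ = 1) (ha : ‖a‖ = 1) (hb : ‖b‖ = 1)
    (S : Submodule ℝ (EuclideanSpace ℝ (Fin n))) (hdim : Module.finrank ℝ S ≤ 2)
    (hwS : w ∈ S) (haS : a ∈ S) (hbS : b ∈ S)
    (haw : ⟪a, w⟫ > 1 / Real.sqrt 2) (hbw : 0 ≤ ⟪b, w⟫) (hab : ⟪a, b⟫ < 0) :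
    ⟪a, b⟫ ≥ -(1 / Real.sqrt 2) ∧ ‖a - b‖ ≤ 3 * min ‖a - b‖ ‖a + b‖ := by
  have hr0 : (0:ℝ) < Real.sqrt 2 := Real.sqrt_pos.mpr (by norm_num)
  have hr2 : Real.sqrt 2 ^ 2 = 2 := Real.sq_sqrt (by norm_num)
  have hww : ⟪w, w⟫ = (1:ℝ) := by
    rw [real_inner_self_eq_norm_sq, hw]; norm_num
  have haa : ⟪a, a⟫ = (1:ℝ) := by rw [real_inner_self_eq_norm_sq, ha]; norm_num
  have hbb : ⟪b, b⟫ = (1:ℝ) := by rw [real_inner_self_eq_norm_sq, hb]; norm_num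
  have h1 : ⟪a - ⟪a, w⟫ • w, b - ⟪b, w⟫ • w⟫ = ⟪a, b⟫ - ⟪a, w⟫ * ⟪b, w⟫ := by
    simp only [inner_sub_left, inner_sub_right, real_inner_smul_left,
      real_inner_smul_right, hww, real_inner_comm w b, real_inner_comm w a]
    ring
  have hna : ‖a - ⟪a, w⟫ • w‖ ^ 2 = 1 - ⟪a, w⟫ ^ 2 := by
    rw [← real_inner_self_eq_norm_sq]
    simp only [inner_sub_left, inner_sub_right, real_inner_smul_left,
      real_inner_smul_right, hww, real_inner_comm w a, haa]
    ring
  have hnb : ‖b - ⟪b, w⟫ • w‖ ^ 2 = 1 - ⟪b, w⟫ ^ 2 := by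
    rw [← real_inner_self_eq_norm_sq]
    simp only [inner_sub_left, inner_sub_right, real_inner_smul_left,
      real_inner_smul_right, hww, real_inner_comm w b, hbb]
    ring
  have habs : |⟪a - ⟪a, w⟫ • w, b - ⟪b, w⟫ • w⟫| ≤
      ‖a - ⟪a, w⟫ • w‖ * ‖b - ⟪b, w⟫ • w‖ := abs_real_inner_le_norm _ _
  rw [h1] at habs
  -- pass to real variables
  set p := ⟪a, b⟫ with hp
  set s := ⟪a, w⟫ with hs
  set t := ⟪b, w⟫ with ht
  set na := ‖a - s • w‖ with hna'
  set nb := ‖b - t • w‖ with hnb'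
  clear_value p s t na nb
  have hna0 : (0:ℝ) ≤ na := hna' ▸ norm_nonneg _
  have hnb0 : (0:ℝ) ≤ nb := hnb' ▸ norm_nonneg _
  have hlow : -(na * nb) ≤ p - s * t := (abs_le.mp habs).1
  have hsr : s * Real.sqrt 2 > 1 := by
    rw [gt_iff_lt, div_lt_iff₀ hr0] at haw; linarith
  have hs0 : 0 < s := lt_trans (by positivity) haw
  have hst : 0 ≤ s * t := mul_nonneg hs0.le hbw
  have hna1 : na * Real.sqrt 2 ≤ 1 := by
    nlinarith [sq_nonneg (na * Real.sqrt 2 - 1), sq_nonneg (s * Real.sqrt 2 - 1)]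
  have hnb1 : nb ≤ 1 := by nlinarith [hnb, sq_nonneg t, sq_nonneg (nb - 1)]
  have key : p ≥ -(1 / Real.sqrt 2) := by
    rw [ge_iff_le, neg_le, ← sub_nonneg]
    have hup : na * nb * Real.sqrt 2 ≤ 1 := by
      have h2 : na * Real.sqrt 2 * nb ≤ 1 * 1 :=
        mul_le_mul hna1 hnb1 hnb0 (by norm_num)
      nlinarith [h2]
    have hup' : na * nb ≤ 1 / Real.sqrt 2 := by
      rw [le_div_iff₀ hr0]; linarith [hup]
    linarith [hlow, hst, hup']
  refine ⟨key, ?_⟩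
  have hd2 : ‖a - b‖ ^ 2 = 2 - 2 * p := by
    rw [norm_sub_sq_real, ha, hb, ← hp]; ring
  have hs2 : ‖a + b‖ ^ 2 = 2 + 2 * p := by
    rw [norm_add_sq_real, ha, hb, ← hp]; ring
  have hd0 : (0:ℝ) ≤ ‖a - b‖ := norm_nonneg _
  have hs0' : (0:ℝ) ≤ ‖a + b‖ := norm_nonneg _
  rcases min_cases ‖a - b‖ ‖a + b‖ with ⟨hm, _⟩ | ⟨hm, _⟩ <;> rw [hm]
  · linarith
  · have hpr : p * Real.sqrt 2 ≥ -1 := by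
      rw [ge_iff_le, neg_le, ← neg_mul]
      calc -p * Real.sqrt 2 ≤ (1 / Real.sqrt 2) * Real.sqrt 2 := by
            apply mul_le_mul_of_nonneg_right _ hr0.le
            linarith [key]
        _ = 1 := by field_simp
    nlinarith [sq_nonneg (‖a - b‖ - 3 * ‖a + b‖), sq_nonneg (Real.sqrt 2 - 3/2)]
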